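/- arXiv:1209.5997 — 2 statements merged into one kernel-verified Lean document; each statement's English description precedes it below -/
import Mathlib

section
/- Let Δ be a positive integer. The quaternion algebra (−1, Δ)_ℚ is isomorphic as a ℚ-algebra to the matrix algebra M₂(ℚ) (i.e. it has zero divisors) if and only if Δ is a sum of two squares of integers. -/
open Quaternion

/-- A quaternionic basis for `M₂(ℚ)` with `i² = -1`, `j² = u² + v²`. -/
noncomputable def stmt18.qb (u v : ℚ) :
    QuaternionAlgebra.Basis (Matrix (Fin 2) (Fin 2) ℚ) (-1) 0 (u ^ 2 + v ^ 2) where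
  i := !![0, 1; -1, 0]
  j := !![u, v; v, -u]
  k := !![0, 1; -1, 0] * !![u, v; v, -u]
  i_mul_i := by
    ext i j
    fin_cases i <;> fin_cases j <;>
      simp [Matrix.mul_apply, Fin.sum_univ_two, Matrix.one_apply]
  j_mul_j := by
    ext i j
    fin_cases i <;> fin_cases j <;>
      simp [Matrix.mul_apply, Fin.sum_univ_two, Matrix.one_apply] <;> ring
  i_mul_j := rfl
  j_mul_i := by
    ext i j
    fin_cases i <;> fin_cases j <;>
      simp [Matrix.mul_apply, Fin.sum_univ_two] <;> ring

lemma stmt18.qb_bijective (u v : ℚ) (h : u ^ 2 + v ^ 2 ≠ 0) :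
    Function.Bijective (stmt18.qb u v).liftHom := by
  have hinj : Function.Injective (stmt18.qb u v).liftHom := by
    rw [injective_iff_map_eq_zero]
    intro x hx
    have hx' : (algebraMap ℚ _ x.re) + x.imI • !![0,1;-1,0] + x.imJ • !![u,v;v,-u]
        + x.imK • (!![0,1;-1,0] * !![(u:ℚ),v;v,-u]) = 0 := hx
    have h00 := congrFun (congrFun hx' 0) 0
    have h01 := congrFun (congrFun hx' 0) 1
    have h10 := congrFun (congrFun hx' 1) 0
    have h11 := congrFun (congrFun hx' 1) 1
    simp [Matrix.mul_apply, Fin.sum_univ_two, Matrix.algebraMap_eq_diagonal]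
      at h00 h01 h10 h11
    have hre : x.re = 0 := by linarith
    have hI : x.imI = 0 := by linarith
    have hJ : x.imJ = 0 := by
      have : x.imJ * (u ^ 2 + v ^ 2) = 0 := by
        linear_combination u * h00 + v * h01 - u * hre - v * hI
      exact (mul_eq_zero.mp this).resolve_right h
    have hK : x.imK = 0 := by
      have : x.imK * (u ^ 2 + v ^ 2) = 0 := by
        linear_combination v * h00 - u * h01 - v * hre + u * hI
      exact (mul_eq_zero.mp this).resolve_right h
    ext <;> assumption
  refine ⟨hinj, ?_⟩
  have := LinearMap.injective_iff_surjective_of_finrank_eq_finrank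
    (f := (stmt18.qb u v).liftHom.toLinearMap) ?_
  · exact this.mp hinj
  · rw [QuaternionAlgebra.finrank_eq_four, Module.finrank_matrix]
    simp

/-- A positive integer which is a sum of two rational squares is a sum of two
integer squares. -/
lemma stmt18.ratsum (Δ : ℤ) (hΔ : 0 < Δ) (r s : ℚ) (h : (Δ : ℚ) = r ^ 2 + s ^ 2) :
    ∃ u v : ℤ, Δ = u ^ 2 + v ^ 2 := by
  have hm0 : 0 < (r.den : ℤ) * s.den := by positivity
  have key : Δ * ((r.den : ℤ) * s.den) ^ 2 = (r.num * s.den) ^ 2 + (s.num * r.den) ^ 2 := by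
    have hr : (r.num : ℚ) = r * r.den := (Rat.mul_den_eq_num r).symm
    have hs : (s.num : ℚ) = s * s.den := (Rat.mul_den_eq_num s).symm
    have : ((Δ * ((r.den : ℤ) * s.den) ^ 2 : ℤ) : ℚ)
        = (((r.num * s.den) ^ 2 + (s.num * r.den) ^ 2 : ℤ) : ℚ) := by
      push_cast
      rw [hr, hs, h]; ring
    exact_mod_cast this
  set n : ℕ := Δ.toNat with hn
  set M : ℕ := ((r.den : ℤ) * s.den).toNat with hM
  have hn0 : n ≠ 0 := by omega
  have hM0 : M ≠ 0 := by omega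
  have h1 : (n : ℤ) = Δ := Int.toNat_of_nonneg hΔ.le
  have h2 : (M : ℤ) = (r.den : ℤ) * s.den := Int.toNat_of_nonneg hm0.le
  have keyN : n * M ^ 2 = (r.num * s.den).natAbs ^ 2 + (s.num * r.den).natAbs ^ 2 := by
    have : ((n * M ^ 2 : ℕ) : ℤ)
        = (((r.num * s.den).natAbs ^ 2 + (s.num * r.den).natAbs ^ 2 : ℕ) : ℤ) := by
      push_cast
      rw [h1, h2, sq_abs, sq_abs]
      exact key
    exact_mod_cast this
  have hev : ∀ q ∈ n.primeFactors, q % 4 = 3 → Even (padicValNat q n) := by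
    intro q hqm h4
    have hq : q.Prime := Nat.prime_of_mem_primeFactors hqm
    have hE := Nat.eq_sq_add_sq_iff.mp ⟨_, _, keyN⟩ q (Nat.mem_primeFactors.mpr
      ⟨hq, dvd_mul_of_dvd_left (Nat.dvd_of_mem_primeFactors hqm) _,
        mul_ne_zero hn0 (pow_ne_zero 2 hM0)⟩) h4
    haveI : Fact q.Prime := ⟨hq⟩
    rw [padicValNat.mul hn0 (pow_ne_zero 2 hM0), padicValNat.pow M 2] at hE
    rcases hE with ⟨k, hk⟩
    exact ⟨k - padicValNat q M, by omega⟩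
  obtain ⟨x, y, hxy⟩ := Nat.eq_sq_add_sq_iff.mpr hev
  refine ⟨x, y, ?_⟩
  rw [← h1]; exact_mod_cast hxy

/-- If `ℍ[ℚ, -1, c]` splits, then `c` is a sum of two rational squares. -/
lemma stmt18.fwd (c : ℚ)
    (e : ℍ[ℚ, -1, c] ≃ₐ[ℚ] Matrix (Fin 2) (Fin 2) ℚ) :
    ∃ r s : ℚ, c = r ^ 2 + s ^ 2 := by
  set q : ℍ[ℚ, -1, c] := e.symm !![0,1;0,0] with hq
  have hq0 : q ≠ 0 := by
    intro h
    rw [hq] at h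
    have h2 : (!![0,1;0,0] : Matrix (Fin 2) (Fin 2) ℚ) = 0 :=
      e.symm.injective (h.trans (map_zero e.symm).symm)
    have := congrFun (congrFun h2 0) 1
    simp at this
  have hqq : q * q = 0 := by
    rw [hq, ← map_mul]
    have : (!![0,1;0,0] : Matrix (Fin 2) (Fin 2) ℚ) * !![0,1;0,0] = 0 := by
      ext i j; fin_cases i <;> fin_cases j <;> simp [Matrix.mul_apply, Fin.sum_univ_two]
    rw [this]; simp
  obtain ⟨a, b, x, y⟩ := q
  rw [QuaternionAlgebra.ext_iff] at hqq
  simp only [QuaternionAlgebra.re_mul, QuaternionAlgebra.imI_mul, QuaternionAlgebra.imJ_mul,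
    QuaternionAlgebra.imK_mul, QuaternionAlgebra.re_zero, QuaternionAlgebra.imI_zero,
    QuaternionAlgebra.imJ_zero, QuaternionAlgebra.imK_zero] at hqq
  obtain ⟨h1, h2, h3, h4⟩ := hqq
  have ha : a = 0 := by
    by_contra ha
    have hb : b = 0 := by
      have : a * b = 0 := by linarith [h2]
      exact (mul_eq_zero.mp this).resolve_left ha
    have hx : x = 0 := by
      have : a * x = 0 := by linarith [h3]
      exact (mul_eq_zero.mp this).resolve_left ha
    have hy : y = 0 := by
      have : a * y = 0 := by linarith [h4]
      exact (mul_eq_zero.mp this).resolve_left ha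
    rw [hb, hx, hy] at h1
    have haa : a * a = 0 := by linarith
    exact ha (mul_self_eq_zero.mp haa)
  subst ha
  have hxy : x ^ 2 + y ^ 2 ≠ 0 := by
    intro h0
    have hx : x = 0 := by nlinarith [sq_nonneg x, sq_nonneg y]
    have hy : y = 0 := by nlinarith [sq_nonneg x, sq_nonneg y]
    have hb : b = 0 := by
      subst hx hy
      nlinarith [h1]
    exact hq0 (by rw [hb, hx, hy]; rfl)
  refine ⟨b * x / (x ^ 2 + y ^ 2), b * y / (x ^ 2 + y ^ 2), ?_⟩
  have hb2 : b ^ 2 = c * (x ^ 2 + y ^ 2) := by nlinarith [h1]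
  field_simp
  nlinarith [hb2]

theorem stmt18 (Δ : ℤ) (hΔ : 0 < Δ) :
    Nonempty (ℍ[ℚ, -1, (Δ : ℚ)] ≃ₐ[ℚ] Matrix (Fin 2) (Fin 2) ℚ) ↔
      ∃ u v : ℤ, Δ = u ^ 2 + v ^ 2 := by
  constructor
  · rintro ⟨e⟩
    obtain ⟨r, s, hrs⟩ := stmt18.fwd _ e
    exact stmt18.ratsum Δ hΔ r s hrs
  · rintro ⟨u, v, huv⟩
    have hcast : (Δ : ℚ) = (u : ℚ) ^ 2 + (v : ℚ) ^ 2 := by exact_mod_cast huv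
    have hne : (u : ℚ) ^ 2 + (v : ℚ) ^ 2 ≠ 0 := by
      rw [← hcast]
      exact_mod_cast hΔ.ne'
    rw [hcast]
    exact ⟨AlgEquiv.ofBijective (stmt18.qb u v).liftHom (stmt18.qb_bijective u v hne)⟩
end

section
/- Let W ∈ M₂(ℂ) satisfy that the hermitian matrix (1/(2i))(W − Wᴴ) is positive definite, and let U = (1/√2)·[[i·I₂, −i·I₂], [I₂, I₂]] ∈ M₄(ℂ). Then the matrix Z = U · diag(W, Wᵀ) · Uᴴ (block diagonal with blocks W and Wᵀ) is a complex symmetric 4×4 matrix (Zᵀ = Z) whose imaginary part (1/(2i))(Z − Z̄) is positive definite; that is, Z lies in the Siegel upper half space 𝔥₄. -/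
open Matrix Complex
open scoped ComplexOrder

/-- The unitary matrix `U = (1/√2)·[[i·I₂, -i·I₂], [I₂, I₂]]`. -/
noncomputable def Umat : Matrix (Fin 2 ⊕ Fin 2) (Fin 2 ⊕ Fin 2) ℂ :=
  ((Real.sqrt 2 : ℂ))⁻¹ •
    Matrix.fromBlocks (Complex.I • 1) ((-Complex.I) • 1) 1 1

/-- The matrix `Z = U · diag(W, Wᵀ) · Uᴴ`. -/
noncomputable def Zmat (W : Matrix (Fin 2) (Fin 2) ℂ) :
    Matrix (Fin 2 ⊕ Fin 2) (Fin 2 ⊕ Fin 2) ℂ :=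
  Umat * Matrix.fromBlocks W 0 0 Wᵀ * Umatᴴ

/-- The swap matrix `J = [[0,1],[1,0]]` (in 2×2 blocks). -/
noncomputable def Jmat : Matrix (Fin 2 ⊕ Fin 2) (Fin 2 ⊕ Fin 2) ℂ :=
  Matrix.fromBlocks 0 1 1 0

lemma Umat_mul_conjTranspose : Umat * Umatᴴ = 1 := by
  have h2 : ((Real.sqrt 2 : ℂ))⁻¹ * ((Real.sqrt 2 : ℂ))⁻¹ = (2 : ℂ)⁻¹ := by
    rw [← mul_inv]
    norm_num [← Complex.ofReal_mul, Real.mul_self_sqrt]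
  simp [Umat, Matrix.fromBlocks_conjTranspose, Matrix.conjTranspose_smul,
    Matrix.fromBlocks_multiply, Matrix.smul_mul, Matrix.mul_smul, smul_smul,
    Complex.I_mul_I, ← Matrix.fromBlocks_one, h2]
  rw [show ((1 : Matrix (Fin 2) (Fin 2) ℂ) + 1) = (2 : ℂ) • 1 by rw [two_smul]]
  simp [Matrix.fromBlocks_smul, smul_smul]

lemma Umat_transpose : Umatᵀ = Jmat * Umatᴴ := by
  simp [Umat, Jmat, Matrix.fromBlocks_transpose, Matrix.fromBlocks_conjTranspose,
    Matrix.fromBlocks_multiply, Matrix.mul_smul]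

lemma Umat_conjTranspose_transpose : (Umatᴴ)ᵀ = Umat * Jmat := by
  simp [Umat, Jmat, Matrix.fromBlocks_transpose, Matrix.fromBlocks_conjTranspose,
    Matrix.fromBlocks_multiply, Matrix.smul_mul]

/-- Congruence by a matrix with `U * Uᴴ = 1` preserves positive definiteness. -/
lemma posDef_conj {n : Type*} [Fintype n] [DecidableEq n]
    {U A : Matrix n n ℂ} (h1 : U * Uᴴ = 1) (hA : A.PosDef) :
    (U * A * Uᴴ).PosDef := by
  rw [Matrix.posDef_iff_dotProduct_mulVec]
  constructor
  · show (U * A * Uᴴ)ᴴ = U * A * Uᴴ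
    rw [Matrix.conjTranspose_mul, Matrix.conjTranspose_mul,
      Matrix.conjTranspose_conjTranspose, hA.1.eq, Matrix.mul_assoc]
  · intro x hx
    have hx' : Umatᴴ ≠ 0 ∨ True := Or.inr trivial
    have hy : Uᴴ *ᵥ x ≠ 0 := by
      intro h
      apply hx
      have := congrArg (fun v => U *ᵥ v) h
      simpa [Matrix.mulVec_mulVec, h1] using this
    have key : star x ⬝ᵥ (U * A * Uᴴ) *ᵥ x
        = star (Uᴴ *ᵥ x) ⬝ᵥ A *ᵥ (Uᴴ *ᵥ x) := by
      rw [Matrix.star_mulVec, Matrix.conjTranspose_conjTranspose,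
        Matrix.mulVec_mulVec, Matrix.dotProduct_mulVec, Matrix.dotProduct_mulVec,
        Matrix.vecMul_vecMul, Matrix.mul_assoc]
    rw [key]
    exact hA.dotProduct_mulVec_pos hy

/-- A block-diagonal matrix with positive-definite blocks is positive definite. -/
lemma posDef_fromBlocks {m n : Type*} [Fintype m] [Fintype n] [DecidableEq m] [DecidableEq n]
    {A : Matrix m m ℂ} {D : Matrix n n ℂ} (hA : A.PosDef) (hD : D.PosDef) :
    (Matrix.fromBlocks A 0 0 D).PosDef := by
  rw [Matrix.posDef_iff_dotProduct_mulVec]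
  constructor
  · show (Matrix.fromBlocks A 0 0 D)ᴴ = _
    rw [Matrix.fromBlocks_conjTranspose, hA.1.eq, hD.1.eq]
    simp
  · intro x hx
    have hxe : x = Sum.elim (x ∘ Sum.inl) (x ∘ Sum.inr) := by
      funext i; cases i <;> rfl
    have hstar : star x = Sum.elim (star (x ∘ Sum.inl)) (star (x ∘ Sum.inr)) := by
      funext i; cases i <;> rfl
    have hmv : (Matrix.fromBlocks A 0 0 D) *ᵥ x
        = Sum.elim (A *ᵥ (x ∘ Sum.inl)) (D *ᵥ (x ∘ Sum.inr)) := by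
      conv_lhs => rw [hxe]
      rw [Matrix.fromBlocks_mulVec]
      simp
    rw [hmv, hstar, sumElim_dotProduct_sumElim]
    have hcase : x ∘ Sum.inl ≠ 0 ∨ x ∘ Sum.inr ≠ 0 := by
      by_contra h
      push_neg at h
      apply hx
      funext i
      cases i with
      | inl i => exact congrFun h.1 i
      | inr i => exact congrFun h.2 i
    rcases hcase with h | h
    · exact add_pos_of_pos_of_nonneg (hA.dotProduct_mulVec_pos h) (hD.posSemidef.dotProduct_mulVec_nonneg _)
    · exact add_pos_of_nonneg_of_pos (hA.posSemidef.dotProduct_mulVec_nonneg _) (hD.dotProduct_mulVec_pos h)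

theorem stmt19 (W : Matrix (Fin 2) (Fin 2) ℂ)
    (hW : ((1 / (2 * Complex.I)) • (W - Wᴴ)).PosDef) :
    (Zmat W)ᵀ = Zmat W ∧
      ((1 / (2 * Complex.I)) •
        (Zmat W - (Zmat W).map (starRingEnd ℂ))).PosDef := by
  have hJDJ : Jmat * (Matrix.fromBlocks W 0 0 Wᵀ)ᵀ * Jmat = Matrix.fromBlocks W 0 0 Wᵀ := by
    simp [Jmat, Matrix.fromBlocks_transpose, Matrix.fromBlocks_multiply]
  have hsym : (Zmat W)ᵀ = Zmat W := by
    calc (Zmat W)ᵀ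
        = (Umatᴴ)ᵀ * ((Matrix.fromBlocks W 0 0 Wᵀ)ᵀ * Umatᵀ) := by
          rw [Zmat, Matrix.transpose_mul, Matrix.transpose_mul]
      _ = (Umat * Jmat) * ((Matrix.fromBlocks W 0 0 Wᵀ)ᵀ * (Jmat * Umatᴴ)) := by
          rw [Umat_transpose, Umat_conjTranspose_transpose]
      _ = Umat * (Jmat * (Matrix.fromBlocks W 0 0 Wᵀ)ᵀ * Jmat) * Umatᴴ := by
          noncomm_ring
      _ = Zmat W := by rw [hJDJ, Zmat]
  refine ⟨hsym, ?_⟩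
  have hmap : (Zmat W).map (starRingEnd ℂ) = (Zmat W)ᴴ := by
    ext i j
    simp only [Matrix.map_apply, Matrix.conjTranspose_apply, starRingEnd_apply]
    conv_rhs => rw [← hsym]
    rfl
  have hZH : (Zmat W)ᴴ = Umat * (Matrix.fromBlocks W 0 0 Wᵀ)ᴴ * Umatᴴ := by
    rw [Zmat, Matrix.conjTranspose_mul, Matrix.conjTranspose_mul,
      Matrix.conjTranspose_conjTranspose, Matrix.mul_assoc]
  have hblock : ((1 / (2 * Complex.I)) •
        (Matrix.fromBlocks W 0 0 Wᵀ - (Matrix.fromBlocks W 0 0 Wᵀ)ᴴ))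
      = Matrix.fromBlocks ((1 / (2 * Complex.I)) • (W - Wᴴ)) 0 0
          (((1 / (2 * Complex.I)) • (W - Wᴴ))ᵀ) := by
    ext i j
    cases i <;> cases j <;>
      simp [Matrix.fromBlocks, Matrix.conjTranspose_apply, Matrix.sub_apply,
        Matrix.smul_apply, Matrix.transpose_apply]
  have heq : (1 / (2 * Complex.I)) • (Zmat W - (Zmat W).map (starRingEnd ℂ))
      = Umat * (Matrix.fromBlocks ((1 / (2 * Complex.I)) • (W - Wᴴ)) 0 0
          (((1 / (2 * Complex.I)) • (W - Wᴴ))ᵀ)) * Umatᴴ := by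
    rw [hmap, hZH, Zmat, ← hblock, ← Matrix.sub_mul, ← Matrix.mul_sub,
      Matrix.mul_smul, Matrix.smul_mul]
  rw [heq]
  exact posDef_conj Umat_mul_conjTranspose (posDef_fromBlocks hW hW.transpose)
end
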